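/- arXiv:2201.10099 — 3 statements merged into one kernel-verified Lean document; each statement's English description precedes it below -/
import Mathlib

section
/- For all t ≥ 0 and all f ∈ C[0,1], μ_t(f) = ∫₀¹ρ(t,u)f(u)du; that is, the solution μ_t of the dual-valued ordinary differential equation has the density ρ(t,·) with respect to Lebesgue measure. -/
open MeasureTheory Set

noncomputable section

/-- The unit interval `[0,1]` as a subset of `ℝ`. -/
abbrev I01 : Set ℝ := Set.Icc 0 1

/-- The adjoint `P₁*` of a bounded operator `P₁` on `C[0,1]`, acting on the dual space,
`(P₁*ν)(f) = ν(P₁ f)`. -/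
noncomputable def dualAdj (P1 : C(I01, ℝ) →L[ℝ] C(I01, ℝ)) :
    (C(I01, ℝ) →L[ℝ] ℝ) →L[ℝ] (C(I01, ℝ) →L[ℝ] ℝ) :=
  (ContinuousLinearMap.compL ℝ C(I01, ℝ) C(I01, ℝ) ℝ).flip P1

/-! The pairing `g ↦ (f ↦ ∫ g f)` is a bounded linear map `C[0,1] → C[0,1]′` that intertwines
`P₈` with `P₁*`: the multiplication parts of `P₁` and `P₈` agree, and their integral parts have
transposed kernels, which Fubini exchanges. Hence `t ↦ ∫ ρ(t,·) ·` solves the same linear ODE as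
`μ` with the same initial value, and solutions of a linear ODE with bounded generator are unique. -/

namespace ContinuousMap

variable {X : Type*} [TopologicalSpace X] [CompactSpace X] [MeasurableSpace X] [BorelSpace X]
  (μ : Measure X) [IsFiniteMeasure μ]

def integralCLM : C(X, ℝ) →L[ℝ] ℝ :=
  L1.integralCLM ∘L toLp 1 μ ℝ

theorem integralCLM_apply (f : C(X, ℝ)) : integralCLM μ f = ∫ x, f x ∂μ := by
  rw [integralCLM, ContinuousLinearMap.comp_apply, ← L1.integral_eq, L1.integral_eq_integral]
  exact integral_congr_ae (coeFn_toLp (p := 1) (𝕜 := ℝ) μ f)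

def integralPairing : C(X, ℝ) →L[ℝ] C(X, ℝ) →L[ℝ] ℝ :=
  ContinuousLinearMap.compL ℝ _ _ ℝ (integralCLM μ) ∘L ContinuousLinearMap.mul ℝ C(X, ℝ)

theorem integralPairing_apply (g f : C(X, ℝ)) :
    integralPairing μ g f = ∫ x, g x * f x ∂μ :=
  integralCLM_apply μ (g * f)

end ContinuousMap

section Kernel

variable {X : Type*} [TopologicalSpace X] [CompactSpace X] [SecondCountableTopology X]
  [MeasurableSpace X] [BorelSpace X] (μ : Measure X) [IsFiniteMeasure μ]

theorem integrable_mul_kernel_mul (K : C(X × X, ℝ)) (f g : C(X, ℝ)) :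
    Integrable (fun p : X × X => f p.1 * K p * g p.2) (μ.prod μ) :=
  (by fun_prop : Continuous fun p : X × X => f p.1 * K p * g p.2).integrable_of_hasCompactSupport
    (.of_compactSpace _)

theorem integral_mul_integral_kernel_eq_integral_prod (K : C(X × X, ℝ)) (f g : C(X, ℝ)) :
    ∫ u, f u * ∫ v, K (u, v) * g v ∂μ ∂μ = ∫ p, f p.1 * K p * g p.2 ∂μ.prod μ := by
  rw [integral_prod _ (integrable_mul_kernel_mul μ K f g)]
  simp only [mul_assoc, integral_const_mul]

theorem integrable_mul_integral_kernel (K : C(X × X, ℝ)) (f g : C(X, ℝ)) :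
    Integrable (fun u => f u * ∫ v, K (u, v) * g v ∂μ) μ := by
  simpa only [mul_assoc, integral_const_mul] using
    (integrable_mul_kernel_mul μ K f g).integral_prod_left

theorem integral_mul_integral_kernel_comm (K : C(X × X, ℝ)) (f g : C(X, ℝ)) :
    ∫ u, f u * ∫ v, K (u, v) * g v ∂μ ∂μ = ∫ u, g u * ∫ v, K (v, u) * f v ∂μ ∂μ :=
  calc ∫ u, f u * ∫ v, K (u, v) * g v ∂μ ∂μ
      = ∫ p, f p.1 * K p * g p.2 ∂μ.prod μ := integral_mul_integral_kernel_eq_integral_prod μ K f g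
    _ = ∫ p, g p.1 * K p.swap * f p.2 ∂μ.prod μ := by
      rw [← integral_prod_swap]
      congr 1 with p
      simp only [Prod.fst_swap, Prod.snd_swap]
      ring
    _ = ∫ u, g u * ∫ v, K (v, u) * f v ∂μ ∂μ :=
      (integral_mul_integral_kernel_eq_integral_prod μ (K.comp ⟨Prod.swap, continuous_swap⟩) g f).symm

theorem integrable_mul_integral_kernel_swap (K : C(X × X, ℝ)) (f g : C(X, ℝ)) :
    Integrable (fun u => f u * ∫ v, K (v, u) * g v ∂μ) μ :=
  integrable_mul_integral_kernel μ (K.comp ⟨Prod.swap, continuous_swap⟩) f g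

theorem integrable_mul_integral_kernel_sub_swap (K : C(X × X, ℝ)) (f g : C(X, ℝ)) :
    Integrable (fun u => f u * ∫ v, K (u, v) * g v ∂μ - g u * ∫ v, K (v, u) * f v ∂μ) μ :=
  (integrable_mul_integral_kernel μ K f g).sub (integrable_mul_integral_kernel_swap μ K g f)

theorem integral_mul_integral_kernel_sub_swap (K : C(X × X, ℝ)) (f g : C(X, ℝ)) :
    ∫ u, (f u * ∫ v, K (u, v) * g v ∂μ - g u * ∫ v, K (v, u) * f v ∂μ) ∂μ = 0 := by
  rw [integral_sub (integrable_mul_integral_kernel μ K f g)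
    (integrable_mul_integral_kernel_swap μ K g f),
    integral_mul_integral_kernel_comm, sub_self]

end Kernel

section LinearODE

variable {E F : Type*} [NormedAddCommGroup E] [NormedSpace ℝ E] [NormedAddCommGroup F]
  [NormedSpace ℝ F]

theorem eqOn_Ici_of_hasDerivWithinAt_linear (A : E →L[ℝ] E) {x y : ℝ → E}
    (hx : ∀ t ∈ Ici (0 : ℝ), HasDerivWithinAt x (A (x t)) (Ici 0) t)
    (hy : ∀ t ∈ Ici (0 : ℝ), HasDerivWithinAt y (A (y t)) (Ici 0) t) (h0 : x 0 = y 0) :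
    EqOn x y (Ici 0) := fun _ ht =>
  ODE_solution_unique (v := fun _ => A) (fun _ => A.lipschitz)
    (fun s hs => (hx s hs.1).continuousWithinAt.mono Icc_subset_Ici_self)
    (fun s hs => (hx s hs.1).mono (Ici_subset_Ici.2 hs.1))
    (fun s hs => (hy s hs.1).continuousWithinAt.mono Icc_subset_Ici_self)
    (fun s hs => (hy s hs.1).mono (Ici_subset_Ici.2 hs.1)) h0 ⟨ht, le_rfl⟩

theorem eqOn_Ici_of_intertwining (A : E →L[ℝ] E) (B : F →L[ℝ] F) (Φ : F →L[ℝ] E)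
    (hΦ : A ∘L Φ = Φ ∘L B) {x : ℝ → E} {y : ℝ → F}
    (hx : ∀ t ∈ Ici (0 : ℝ), HasDerivWithinAt x (A (x t)) (Ici 0) t)
    (hy : ∀ t ∈ Ici (0 : ℝ), HasDerivWithinAt y (B (y t)) (Ici 0) t) (h0 : x 0 = Φ (y 0)) :
    EqOn x (Φ ∘ y) (Ici 0) := by
  refine eqOn_Ici_of_hasDerivWithinAt_linear A hx (fun t ht => ?_) h0
  rw [Function.comp_apply, ← ContinuousLinearMap.comp_apply, hΦ]
  exact Φ.hasFDerivAt.comp_hasDerivWithinAt t (hy t ht)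

end LinearODE

section Model

variable {b c : C(I01, ℝ)} {lam a1 a2 a3 a4 : C(I01 × I01, ℝ)}
    {P1 : C(I01, ℝ) →L[ℝ] C(I01, ℝ)}
    (hP1 : ∀ (f : C(I01, ℝ)) (u : I01),
      P1 f u = b u * (c u - 1) * f u
        + f u * (∫ v : I01, lam (u, v) * (a1 (u, v) - 1))
        + (∫ v : I01, lam (u, v) * a3 (u, v) * f v)
        + f u * (∫ v : I01, lam (v, u) * (a4 (v, u) - 1))
        + (∫ v : I01, lam (v, u) * f v * a2 (v, u)))
    {P8 : C(I01, ℝ) →L[ℝ] C(I01, ℝ)}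
    (hP8 : ∀ (f : C(I01, ℝ)) (u : I01),
      P8 f u = b u * (c u - 1) * f u
        + f u * (∫ v : I01, lam (v, u) * (a4 (v, u) - 1))
        + f u * (∫ v : I01, lam (u, v) * (a1 (u, v) - 1))
        + (∫ v : I01, lam (u, v) * a2 (u, v) * f v)
        + (∫ v : I01, lam (v, u) * a3 (v, u) * f v))

include hP1 hP8 in
theorem integral_P8_mul_eq_integral_mul_P1 (g f : C(I01, ℝ)) :
    ∫ u, P8 g u * f u = ∫ u, g u * P1 f u := by
  set K2 := lam * a2
  set K3 := lam * a3
  have hgP1f : Integrable (fun u => g u * P1 f u) :=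
    (g * P1 f).continuous.integrable_of_hasCompactSupport (.of_compactSpace _)
  have hD2 := integrable_mul_integral_kernel_sub_swap volume K2 f g
  have hD3 := integrable_mul_integral_kernel_sub_swap volume K3 g f
  have hpt : ∀ u, P8 g u * f u = g u * P1 f u
      + ((f u * ∫ v, K2 (u, v) * g v) - g u * ∫ v, K2 (v, u) * f v)
      - ((g u * ∫ v, K3 (u, v) * f v) - f u * ∫ v, K3 (v, u) * g v) := by
    intro u
    have h2 : ∫ v, lam (v, u) * f v * a2 (v, u) = ∫ v, K2 (v, u) * f v := by
      congr 1 with v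
      simp only [K2, ContinuousMap.mul_apply]
      ring
    rw [hP8, hP1, h2]
    simp only [K2, K3, ContinuousMap.mul_apply]
    ring
  rw [integral_congr_ae (.of_forall hpt), integral_sub _ hD3, integral_add hgP1f hD2,
    integral_mul_integral_kernel_sub_swap, integral_mul_integral_kernel_sub_swap, add_zero, sub_zero]
  exact hgP1f.add hD2

include hP1 hP8 in
theorem dualAdj_comp_integralPairing :
    dualAdj P1 ∘L ContinuousMap.integralPairing volume
      = ContinuousMap.integralPairing volume ∘L P8 := by
  ext g f
  change ContinuousMap.integralPairing volume g (P1 f) = ContinuousMap.integralPairing volume (P8 g) f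
  rw [ContinuousMap.integralPairing_apply, ContinuousMap.integralPairing_apply,
    integral_P8_mul_eq_integral_mul_P1 hP1 hP8]

end Model

theorem stmt3_general
    (b c : C(I01, ℝ)) (lam a1 a2 a3 a4 : C(I01 × I01, ℝ))
    (φ : C(I01, ℝ))
    (P1 : C(I01, ℝ) →L[ℝ] C(I01, ℝ))
    (hP1 : ∀ (f : C(I01, ℝ)) (u : I01),
      P1 f u = b u * (c u - 1) * f u
        + f u * (∫ v : I01, lam (u, v) * (a1 (u, v) - 1))
        + (∫ v : I01, lam (u, v) * a3 (u, v) * f v)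
        + f u * (∫ v : I01, lam (v, u) * (a4 (v, u) - 1))
        + (∫ v : I01, lam (v, u) * f v * a2 (v, u)))
    (P8 : C(I01, ℝ) →L[ℝ] C(I01, ℝ))
    (hP8 : ∀ (f : C(I01, ℝ)) (u : I01),
      P8 f u = b u * (c u - 1) * f u
        + f u * (∫ v : I01, lam (v, u) * (a4 (v, u) - 1))
        + f u * (∫ v : I01, lam (u, v) * (a1 (u, v) - 1))
        + (∫ v : I01, lam (u, v) * a2 (u, v) * f v)
        + (∫ v : I01, lam (v, u) * a3 (v, u) * f v))
    (μ0 : C(I01, ℝ) →L[ℝ] ℝ) (hμ0 : ∀ f : C(I01, ℝ), μ0 f = ∫ u : I01, φ u * f u)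
    (μ : ℝ → (C(I01, ℝ) →L[ℝ] ℝ)) (hμinit : μ 0 = μ0)
    (hμ : ∀ t ∈ Set.Ici (0 : ℝ), HasDerivWithinAt μ (dualAdj P1 (μ t)) (Set.Ici 0) t)
    (ρ : ℝ → C(I01, ℝ)) (hρinit : ρ 0 = φ)
    (hρ : ∀ t ∈ Set.Ici (0 : ℝ), HasDerivWithinAt ρ (P8 (ρ t)) (Set.Ici 0) t) :
    ∀ t ∈ Set.Ici (0 : ℝ), ∀ f : C(I01, ℝ),
      μ t f = ∫ u : I01, ρ t u * f u := by
  intro t ht f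
  have h0 : μ 0 = ContinuousMap.integralPairing volume (ρ 0) := by
    ext f
    rw [hμinit, hμ0, hρinit, ContinuousMap.integralPairing_apply]
  rw [eqOn_Ici_of_intertwining (x := μ) _ _ _
    (dualAdj_comp_integralPairing hP1 hP8) hμ hρ h0 ht]
  exact ContinuousMap.integralPairing_apply volume (ρ t) f

/-- for all `t ≥ 0` and `f ∈ C[0,1]`, `μ_t(f) = ∫₀¹ ρ(t,u) f(u) du`;
the solution `μ_t` of the dual-valued ODE has density `ρ(t,·)`. -/
theorem stmt3
    (b c : C(I01, ℝ)) (lam a1 a2 a3 a4 : C(I01 × I01, ℝ))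
    (hb : ∀ u, 0 ≤ b u) (hc : ∀ u, 0 ≤ c u)
    (hlam : ∀ p, 0 ≤ lam p) (ha1 : ∀ p, 0 ≤ a1 p) (ha2 : ∀ p, 0 ≤ a2 p)
    (ha3 : ∀ p, 0 ≤ a3 p) (ha4 : ∀ p, 0 ≤ a4 p)
    (φ : C(I01, ℝ))
    (P1 : C(I01, ℝ) →L[ℝ] C(I01, ℝ))
    (hP1 : ∀ (f : C(I01, ℝ)) (u : I01),
      P1 f u = b u * (c u - 1) * f u
        + f u * (∫ v : I01, lam (u, v) * (a1 (u, v) - 1))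
        + (∫ v : I01, lam (u, v) * a3 (u, v) * f v)
        + f u * (∫ v : I01, lam (v, u) * (a4 (v, u) - 1))
        + (∫ v : I01, lam (v, u) * f v * a2 (v, u)))
    (P8 : C(I01, ℝ) →L[ℝ] C(I01, ℝ))
    (hP8 : ∀ (f : C(I01, ℝ)) (u : I01),
      P8 f u = b u * (c u - 1) * f u
        + f u * (∫ v : I01, lam (v, u) * (a4 (v, u) - 1))
        + f u * (∫ v : I01, lam (u, v) * (a1 (u, v) - 1))
        + (∫ v : I01, lam (u, v) * a2 (u, v) * f v)
        + (∫ v : I01, lam (v, u) * a3 (v, u) * f v))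
    (μ0 : C(I01, ℝ) →L[ℝ] ℝ) (hμ0 : ∀ f : C(I01, ℝ), μ0 f = ∫ u : I01, φ u * f u)
    (μ : ℝ → (C(I01, ℝ) →L[ℝ] ℝ)) (hμinit : μ 0 = μ0)
    (hμ : ∀ t ∈ Set.Ici (0 : ℝ), HasDerivWithinAt μ (dualAdj P1 (μ t)) (Set.Ici 0) t)
    (ρ : ℝ → C(I01, ℝ)) (hρinit : ρ 0 = φ)
    (hρ : ∀ t ∈ Set.Ici (0 : ℝ), HasDerivWithinAt ρ (P8 (ρ t)) (Set.Ici 0) t) :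
    ∀ t ∈ Set.Ici (0 : ℝ), ∀ f : C(I01, ℝ),
      μ t f = ∫ u : I01, ρ t u * f u :=
  stmt3_general b c lam a1 a2 a3 a4 φ P1 hP1 P8 hP8 μ0 hμ0 μ hμinit hμ ρ hρinit hρ
end
end

section
/- Let T > 0 and let ν : [0,T] → (C[0,1])′ be continuous in the dual norm and satisfy the integral equation ν_t(f) = ∫₀¹φ(u)f(u)du + ∫₀^t ν_s(P₁f)ds for every f ∈ C[0,1] and every t ∈ [0,T]. Then ν_t(f) = ∫₀¹ρ(t,u)f(u)du for every f ∈ C[0,1] and t ∈ [0,T]. -/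
/-!
For the pairing `⟪g, f⟫ = ∫ g f`, the operator `P₈` is the adjoint of `P₁`: their multiplication
parts coincide and their integral kernels are transposes of each other, which Fubini exchanges.
Hence both `ν` (after differentiating its integral equation) and `t ↦ ⟪ρ t, ·⟫` solve the linear
equation `μ' = μ ∘ P₁` in the dual of `C[0,1]` with the same initial value `⟪φ, ·⟫`, and the
uniqueness theorem for Lipschitz ODEs identifies them.
-/

open MeasureTheory Set

noncomputable section

open Filter Topology

section CompactIntegral

variable {X : Type*} [MetricSpace X] [CompactSpace X] [MeasurableSpace X] [BorelSpace X]
  (μ : Measure X) [IsFiniteMeasure μ]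

theorem Continuous.integrable_of_compactSpace {E : Type*} [NormedAddCommGroup E] {f : X → E}
    (hf : Continuous f) : Integrable f μ :=
  hf.integrable_of_hasCompactSupport (.of_compactSpace f)

def ContinuousMap.integralCLM_s4 : C(X, ℝ) →L[ℝ] ℝ :=
  LinearMap.mkContinuous
    { toFun := fun f => ∫ x, f x ∂μ
      map_add' := fun f g =>
        integral_add (f.continuous.integrable_of_compactSpace μ)
          (g.continuous.integrable_of_compactSpace μ)
      map_smul' := fun r f => integral_smul r f }
    (μ.real univ) fun f => by
      rw [mul_comm]
      exact norm_integral_le_of_norm_le_const (.of_forall f.norm_coe_le_norm)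

def ContinuousMap.integralPairing_s4 : C(X, ℝ) →L[ℝ] C(X, ℝ) →L[ℝ] ℝ :=
  ContinuousLinearMap.compL ℝ C(X, ℝ) C(X, ℝ) ℝ (ContinuousMap.integralCLM_s4 μ) ∘L
    ContinuousLinearMap.mul ℝ C(X, ℝ)

@[simp]
theorem ContinuousMap.integralPairing_apply_s4 (g f : C(X, ℝ)) :
    ContinuousMap.integralPairing_s4 μ g f = ∫ x, g x * f x ∂μ :=
  rfl

theorem integral_mul_integral_kernel_swap {K : X × X → ℝ} (hK : Continuous K) (f g : C(X, ℝ)) :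
    ∫ u, g u * ∫ v, K (u, v) * f v ∂μ ∂μ = ∫ u, (∫ v, K (v, u) * g v ∂μ) * f u ∂μ := by
  simp_rw [← integral_const_mul, ← integral_mul_const]
  refine (integral_integral_swap ?_).trans (integral_congr_ae (.of_forall fun u => ?_))
  · exact Continuous.integrable_of_compactSpace _ (by fun_prop)
  · exact integral_congr_ae (.of_forall fun v => by ring)

theorem integral_mul_eq_integral_mul_of_kernel (m : X → ℝ) {K : X × X → ℝ} (hK : Continuous K)
    {f g p q : C(X, ℝ)} (hp : ∀ u, p u = m u * f u + ∫ v, K (u, v) * f v ∂μ)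
    (hq : ∀ u, q u = m u * g u + ∫ v, K (v, u) * g v ∂μ) :
    ∫ u, g u * p u ∂μ = ∫ u, q u * f u ∂μ := by
  have hKf : Continuous fun u => ∫ v, K (u, v) * f v ∂μ := by
    simpa using continuous_parametric_integral_of_continuous (μ := μ) (by fun_prop) isCompact_univ
  have hKg : Continuous fun u => ∫ v, K (v, u) * g v ∂μ := by
    simpa using continuous_parametric_integral_of_continuous (μ := μ) (by fun_prop) isCompact_univ
  rw [← sub_eq_zero, ← integral_sub (Continuous.integrable_of_compactSpace _ (by fun_prop))
    (Continuous.integrable_of_compactSpace _ (by fun_prop))]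
  calc ∫ u, g u * p u - q u * f u ∂μ
      = ∫ u, g u * (∫ v, K (u, v) * f v ∂μ) - (∫ v, K (v, u) * g v ∂μ) * f u ∂μ := by
        congr 1 with u
        rw [hp, hq]
        ring
    _ = 0 := by
        rw [integral_sub (Continuous.integrable_of_compactSpace _ (by fun_prop))
          (Continuous.integrable_of_compactSpace _ (by fun_prop)),
          integral_mul_integral_kernel_swap μ hK, sub_self]

end CompactIntegral

section DualEquation

variable {E F : Type*} [NormedAddCommGroup E] [NormedSpace ℝ E]
  [NormedAddCommGroup F] [NormedSpace ℝ F] [CompleteSpace F]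

theorem hasDerivWithinAt_Ici_of_eq_add_intervalIntegral {x w : ℝ → F} {a b : ℝ}
    (hw : ContinuousOn w (Icc a b)) (hx : ∀ t ∈ Icc a b, x t = x a + ∫ s in a..t, w s)
    {t : ℝ} (ht : t ∈ Ico a b) : HasDerivWithinAt x (w t) (Ici t) t := by
  have ht' : t ∈ Icc a b := Ico_subset_Icc_self ht
  -- provides the `FTCFilter` instance for one-sided derivatives within `Icc a b`
  have : Fact (t ∈ Icc a b) := ⟨ht'⟩
  have hderiv : HasDerivWithinAt (fun u => x a + ∫ s in a..u, w s) (w t) (Icc a b) t :=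
    (intervalIntegral.integral_hasDerivWithinAt_right
      ((hw.mono (uIcc_subset_Icc (left_mem_Icc.2 (ht.1.trans ht.2.le)) ht')).intervalIntegrable)
      (hw.stronglyMeasurableAtFilter_nhdsWithin measurableSet_Icc t) (hw t ht')).const_add _
  have hnhds : Icc a b ∈ 𝓝[Ici t] t :=
    mem_of_superset (Icc_mem_nhdsGE ht.2) (Icc_subset_Icc_left ht.1)
  exact (hderiv.mono_of_mem_nhdsWithin hnhds).congr_of_eventuallyEq
    (eventually_of_mem hnhds hx) (hx t ht')

theorem eqOn_of_integral_equation_of_adjoint (π : E →L[ℝ] E →L[ℝ] F) {A B : E →L[ℝ] E}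
    (hAB : ∀ g f, π g (A f) = π (B g) f) {ρ : ℝ → E}
    (hρ : ∀ t ∈ Ici (0 : ℝ), HasDerivWithinAt ρ (B (ρ t)) (Ici 0) t)
    {ν : ℝ → E →L[ℝ] F} {T : ℝ} (hν : ContinuousOn ν (Icc 0 T))
    (hνeq : ∀ f, ∀ t ∈ Icc 0 T, ν t f = π (ρ 0) f + ∫ s in 0..t, ν s (A f)) :
    EqOn ν (fun t => π (ρ t)) (Icc 0 T) := by
  intro t ht
  let L : (E →L[ℝ] F) →L[ℝ] E →L[ℝ] F := (ContinuousLinearMap.compL ℝ E E F).flip A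
  have hLν : ContinuousOn (fun s => L (ν s)) (Icc 0 T) := L.continuous.comp_continuousOn hν
  have hνint : ∀ t ∈ Icc 0 T, ν t = π (ρ 0) + ∫ s in 0..t, L (ν s) := by
    intro t ht
    ext f
    rw [add_apply, ContinuousLinearMap.intervalIntegral_apply
      ((hLν.mono (uIcc_subset_Icc (left_mem_Icc.2 (ht.1.trans ht.2)) ht)).intervalIntegrable),
      hνeq f t ht]
    rfl
  have hν0 : ν 0 = π (ρ 0) := by simpa using hνint 0 (left_mem_Icc.2 (ht.1.trans ht.2))
  have hπρ : ∀ t ∈ Ici (0 : ℝ), HasDerivWithinAt (fun s => π (ρ s)) (L (π (ρ t))) (Ici 0) t := by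
    intro t ht
    refine (π.hasFDerivAt.comp_hasDerivWithinAt t (hρ t ht)).congr_deriv ?_
    ext f
    exact (hAB (ρ t) f).symm
  refine ODE_solution_unique_of_mem_Icc_right (v := fun _ => L) (s := fun _ => univ)
    (fun _ _ => L.lipschitz.lipschitzOnWith) hν
    (fun t ht => hasDerivWithinAt_Ici_of_eq_add_intervalIntegral hLν (hν0 ▸ hνint) ht)
    (fun _ _ => trivial) (fun t ht => (hπρ t ht.1).continuousWithinAt.mono ?_)
    (fun t ht => (hπρ t ht.1).mono (Ici_subset_Ici.2 ht.1)) (fun _ _ => trivial) hν0 ht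
  exact fun s hs => hs.1

end DualEquation

theorem integral_mul_P1_eq_integral_P8_mul (b c : C(I01, ℝ)) (lam a1 a2 a3 a4 : C(I01 × I01, ℝ))
    {P1 P8 : C(I01, ℝ) → C(I01, ℝ)}
    (hP1 : ∀ (f : C(I01, ℝ)) (u : I01),
      P1 f u = b u * (c u - 1) * f u
        + f u * (∫ v : I01, lam (u, v) * (a1 (u, v) - 1))
        + (∫ v : I01, lam (u, v) * a3 (u, v) * f v)
        + f u * (∫ v : I01, lam (v, u) * (a4 (v, u) - 1))
        + (∫ v : I01, lam (v, u) * f v * a2 (v, u)))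
    (hP8 : ∀ (f : C(I01, ℝ)) (u : I01),
      P8 f u = b u * (c u - 1) * f u
        + f u * (∫ v : I01, lam (v, u) * (a4 (v, u) - 1))
        + f u * (∫ v : I01, lam (u, v) * (a1 (u, v) - 1))
        + (∫ v : I01, lam (u, v) * a2 (u, v) * f v)
        + (∫ v : I01, lam (v, u) * a3 (v, u) * f v))
    (g f : C(I01, ℝ)) :
    ∫ u : I01, g u * P1 f u = ∫ u : I01, P8 g u * f u := by
  have hint : ∀ {h : I01 → ℝ}, Continuous h → Integrable h :=
    fun hh => hh.integrable_of_compactSpace volume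
  refine integral_mul_eq_integral_mul_of_kernel volume
    (fun u => b u * (c u - 1) + (∫ v : I01, lam (u, v) * (a1 (u, v) - 1))
      + ∫ v : I01, lam (v, u) * (a4 (v, u) - 1))
    (K := fun p => lam p * a3 p + lam p.swap * a2 p.swap) (by fun_prop) (fun u => ?_) (fun u => ?_)
  · simp only [hP1, mul_right_comm _ (f _) (a2 _), add_mul, Prod.swap_prod_mk]
    rw [integral_add (hint ?_) (hint ?_)]
    · ring
    all_goals fun_prop
  · simp only [hP8, add_mul, Prod.swap_prod_mk]
    rw [integral_add (hint ?_) (hint ?_)]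
    · ring
    all_goals fun_prop

theorem stmt4_general
    (b c : C(I01, ℝ)) (lam a1 a2 a3 a4 : C(I01 × I01, ℝ))
    (φ : C(I01, ℝ)) (T : ℝ)
    (P1 : C(I01, ℝ) →L[ℝ] C(I01, ℝ))
    (hP1 : ∀ (f : C(I01, ℝ)) (u : I01),
      P1 f u = b u * (c u - 1) * f u
        + f u * (∫ v : I01, lam (u, v) * (a1 (u, v) - 1))
        + (∫ v : I01, lam (u, v) * a3 (u, v) * f v)
        + f u * (∫ v : I01, lam (v, u) * (a4 (v, u) - 1))
        + (∫ v : I01, lam (v, u) * f v * a2 (v, u)))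
    (P8 : C(I01, ℝ) →L[ℝ] C(I01, ℝ))
    (hP8 : ∀ (f : C(I01, ℝ)) (u : I01),
      P8 f u = b u * (c u - 1) * f u
        + f u * (∫ v : I01, lam (v, u) * (a4 (v, u) - 1))
        + f u * (∫ v : I01, lam (u, v) * (a1 (u, v) - 1))
        + (∫ v : I01, lam (u, v) * a2 (u, v) * f v)
        + (∫ v : I01, lam (v, u) * a3 (v, u) * f v))
    (ρ : ℝ → C(I01, ℝ)) (hρinit : ρ 0 = φ)
    (hρ : ∀ t ∈ Set.Ici (0 : ℝ), HasDerivWithinAt ρ (P8 (ρ t)) (Set.Ici 0) t)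
    (ν : ℝ → (C(I01, ℝ) →L[ℝ] ℝ))
    (hνcont : ContinuousOn ν (Set.Icc 0 T))
    (hνeq : ∀ f : C(I01, ℝ), ∀ t ∈ Set.Icc (0 : ℝ) T,
      ν t f = (∫ u : I01, φ u * f u) + ∫ s in (0 : ℝ)..t, ν s (P1 f)) :
    ∀ t ∈ Set.Icc (0 : ℝ) T, ∀ f : C(I01, ℝ),
      ν t f = ∫ u : I01, ρ t u * f u := by
  intro t ht f
  have hadj : ∀ g f, ContinuousMap.integralPairing_s4 volume g (P1 f) =
      ContinuousMap.integralPairing_s4 volume (P8 g) f := fun g f => by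
    simpa only [ContinuousMap.integralPairing_apply_s4] using
      integral_mul_P1_eq_integral_P8_mul b c lam a1 a2 a3 a4 hP1 hP8 g f
  have hνeq' : ∀ f, ∀ t ∈ Icc (0 : ℝ) T,
      ν t f = ContinuousMap.integralPairing_s4 volume (ρ 0) f + ∫ s in (0 : ℝ)..t, ν s (P1 f) := by
    simpa only [ContinuousMap.integralPairing_apply_s4, hρinit] using hνeq
  have hνρ := eqOn_of_integral_equation_of_adjoint _ hadj hρ hνcont hνeq' ht
  simpa only [ContinuousMap.integralPairing_apply_s4] using DFunLike.congr_fun hνρ f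

/-- if `ν : [0,T] → (C[0,1])′` is norm-continuous and satisfies the integral
equation `ν_t(f) = ∫₀¹ φ f + ∫₀^t ν_s(P₁f) ds`, then `ν_t(f) = ∫₀¹ ρ(t,u) f(u) du`. -/
theorem stmt4
    (b c : C(I01, ℝ)) (lam a1 a2 a3 a4 : C(I01 × I01, ℝ))
    (hb : ∀ u, 0 ≤ b u) (hc : ∀ u, 0 ≤ c u)
    (hlam : ∀ p, 0 ≤ lam p) (ha1 : ∀ p, 0 ≤ a1 p) (ha2 : ∀ p, 0 ≤ a2 p)
    (ha3 : ∀ p, 0 ≤ a3 p) (ha4 : ∀ p, 0 ≤ a4 p)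
    (φ : C(I01, ℝ)) (T : ℝ) (hT : 0 < T)
    (P1 : C(I01, ℝ) →L[ℝ] C(I01, ℝ))
    (hP1 : ∀ (f : C(I01, ℝ)) (u : I01),
      P1 f u = b u * (c u - 1) * f u
        + f u * (∫ v : I01, lam (u, v) * (a1 (u, v) - 1))
        + (∫ v : I01, lam (u, v) * a3 (u, v) * f v)
        + f u * (∫ v : I01, lam (v, u) * (a4 (v, u) - 1))
        + (∫ v : I01, lam (v, u) * f v * a2 (v, u)))
    (P8 : C(I01, ℝ) →L[ℝ] C(I01, ℝ))
    (hP8 : ∀ (f : C(I01, ℝ)) (u : I01),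
      P8 f u = b u * (c u - 1) * f u
        + f u * (∫ v : I01, lam (v, u) * (a4 (v, u) - 1))
        + f u * (∫ v : I01, lam (u, v) * (a1 (u, v) - 1))
        + (∫ v : I01, lam (u, v) * a2 (u, v) * f v)
        + (∫ v : I01, lam (v, u) * a3 (v, u) * f v))
    (ρ : ℝ → C(I01, ℝ)) (hρinit : ρ 0 = φ)
    (hρ : ∀ t ∈ Set.Ici (0 : ℝ), HasDerivWithinAt ρ (P8 (ρ t)) (Set.Ici 0) t)
    (ν : ℝ → (C(I01, ℝ) →L[ℝ] ℝ))
    (hνcont : ContinuousOn ν (Set.Icc 0 T))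
    (hνeq : ∀ f : C(I01, ℝ), ∀ t ∈ Set.Icc (0 : ℝ) T,
      ν t f = (∫ u : I01, φ u * f u) + ∫ s in (0 : ℝ)..t, ν s (P1 f)) :
    ∀ t ∈ Set.Icc (0 : ℝ) T, ∀ f : C(I01, ℝ),
      ν t f = ∫ u : I01, ρ t u * f u :=
  stmt4_general b c lam a1 a2 a3 a4 φ T P1 hP1 P8 hP8 ρ hρinit hρ ν hνcont hνeq
end
end

section
/- (Pair-symmetric exclusion specialization.) Suppose b ≡ 0, a₁ ≡ 0, a₄ ≡ 0, a₂ ≡ 1 and a₃ ≡ 1. Then l̂_{1,t} ≡ 0 and ϑ(t,·) = ρ(t,·) for all t ∈ [0,T]; moreover, for every f ∈ C[0,1] and s ∈ [0,T], [f,f]_s = ∫₀¹∫₀¹ λ(u,v)(ρ(s,u) + ρ(s,v) − 2ρ(s,u)ρ(s,v))(f(u) − f(v))² dudv. -/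
/-!
In this specialization `P₉ = P₈` and `l̂₁ ≡ 0`, so `ϑ` and `ρ` solve the same linear ODE with
the same initial value and coincide by Gronwall uniqueness. With `ϑ = ρ` the kernels reduce to
`K₁(s,u) = ∫ (k(u,v) + k(v,u)) dv` and `K₂(s,u,v) = -2 k(u,v)`, where
`k(u,v) = λ(u,v)(ρ(s,u) + ρ(s,v) - 2ρ(s,u)ρ(s,v))`, and expanding `(f(u) - f(v))²` turns
`∫∫ k(u,v)(f(u) - f(v))²` into `[f,f]_s` once the variables are swapped in the `f(v)²` term.
-/

open MeasureTheory Set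

noncomputable section

/-- The kernel `K₁(s,u)`. -/
noncomputable def K1 (b c : C(I01, ℝ)) (lam a1 a2 a3 a4 : C(I01 × I01, ℝ))
    (ρ ϑ : ℝ → C(I01, ℝ)) (s : ℝ) (u : I01) : ℝ :=
  ϑ s u * b u * (c u - 1) ^ 2
  + ϑ s u * (∫ v : I01, lam (u, v) * (a1 (u, v) - 1) ^ 2)
  + (∫ v : I01, ϑ s v * lam (u, v) * a2 (u, v) ^ 2)
  + (∫ v : I01, lam (v, u) * a3 (v, u) ^ 2 * ϑ s v)
  + ϑ s u * (∫ v : I01, lam (v, u) * (a4 (v, u) - 1) ^ 2)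
  + 2 * ρ s u * (∫ v : I01, lam (u, v) * (a1 (u, v) - 1) * a2 (u, v) * ρ s v)
  + 2 * ρ s u * (∫ v : I01, lam (v, u) * a3 (v, u) * (a4 (v, u) - 1) * ρ s v)

/-- The kernel `K₂(s,u,v)`. -/
noncomputable def K2 (lam a1 a2 a3 a4 : C(I01 × I01, ℝ))
    (ρ ϑ : ℝ → C(I01, ℝ)) (s : ℝ) (u v : I01) : ℝ :=
  2 * lam (u, v) * (a1 (u, v) - 1) * a3 (u, v) * ϑ s u
  + 2 * lam (u, v) * a2 (u, v) * (a4 (u, v) - 1) * ϑ s v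
  + 2 * lam (u, v) * (a1 (u, v) - 1) * (a4 (u, v) - 1) * ρ s u * ρ s v
  + 2 * lam (u, v) * a2 (u, v) * a3 (u, v) * ρ s u * ρ s v

/-- The quadratic form `[f,f]_s = ∫₀¹K₁(s,u)f²(u)du + ∫₀¹∫₀¹K₂(s,u,v)f(u)f(v)dudv`. -/
noncomputable def brk (b c : C(I01, ℝ)) (lam a1 a2 a3 a4 : C(I01 × I01, ℝ))
    (ρ ϑ : ℝ → C(I01, ℝ)) (s : ℝ) (f : C(I01, ℝ)) : ℝ :=
  (∫ u : I01, K1 b c lam a1 a2 a3 a4 ρ ϑ s u * f u ^ 2)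
  + ∫ u : I01, ∫ v : I01, K2 lam a1 a2 a3 a4 ρ ϑ s u v * f u * f v

open Function

lemma integral_prod_eq_zero_of_swap_eq_neg {α : Type*} [MeasurableSpace α] {μ : Measure α}
    [SFinite μ] {G : α × α → ℝ} (hG : ∀ p, G p.swap = -G p) : ∫ p, G p ∂μ.prod μ = 0 := by
  have h := integral_prod_swap (μ := μ) (ν := μ) G
  simp only [hG, integral_neg] at h
  linarith

section CompactIntegrals

variable {X : Type*} [TopologicalSpace X] [CompactSpace X] [MeasurableSpace X]
  [OpensMeasurableSpace X] {μ : Measure X} [IsFiniteMeasure μ]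

lemma Continuous.integrable_of_compactSpace_s13 {g : X → ℝ} (hg : Continuous g) :
    Integrable g μ :=
  hg.integrable_of_hasCompactSupport (.of_compactSpace g)

theorem integral_integral_mul_sub_sq [SecondCountableTopology X] {k : X → X → ℝ}
    (hk : Continuous (uncurry k)) {f : X → ℝ} (hf : Continuous f) :
    ∫ u, ∫ v, k u v * (f u - f v) ^ 2 ∂μ ∂μ
      = ∫ u, (∫ v, (k u v + k v u) ∂μ) * f u ^ 2 ∂μ
        - 2 * ∫ u, ∫ v, k u v * f u * f v ∂μ ∂μ := by
  have hint {F : X × X → ℝ} (hF : Continuous F) : Integrable F (μ.prod μ) :=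
    hF.integrable_of_compactSpace_s13
  have hk₁ : Continuous fun p : X × X => k p.1 p.2 := hk
  have hk₂ : Continuous fun p : X × X => k p.2 p.1 := hk.comp continuous_swap
  simp only [← integral_mul_const]
  rw [integral_integral (hint (by fun_prop)), integral_integral (hint (by fun_prop)),
    integral_integral (hint (by fun_prop)), ← integral_const_mul,
    ← integral_sub (hint (by fun_prop)) (hint (by fun_prop)), ← sub_eq_zero,
    ← integral_sub (hint (by fun_prop)) (hint (by fun_prop)),
    ← integral_prod_eq_zero_of_swap_eq_neg (μ := μ)
      (G := fun p => k p.1 p.2 * f p.2 ^ 2 - k p.2 p.1 * f p.1 ^ 2) (fun p => by simp)]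
  congr 1
  ext p
  ring

end CompactIntegrals

theorem ODE_solution_unique_linear_of_mem_Icc_right {E : Type*} [NormedAddCommGroup E]
    [NormedSpace ℝ E] (A : E →L[ℝ] E) {x y : ℝ → E} {a b : ℝ}
    (hx : ∀ t ∈ Icc a b, HasDerivWithinAt x (A (x t)) (Icc a b) t)
    (hy : ∀ t ∈ Icc a b, HasDerivWithinAt y (A (y t)) (Icc a b) t)
    (ha : x a = y a) : EqOn x y (Icc a b) := by
  have hright {z : ℝ → E} (hz : ∀ t ∈ Icc a b, HasDerivWithinAt z (A (z t)) (Icc a b) t)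
      (t : ℝ) (ht : t ∈ Ico a b) : HasDerivWithinAt z (A (z t)) (Ici t) t :=
    (hz t (Ico_subset_Icc_self ht)).mono_of_mem_nhdsWithin (Icc_mem_nhdsGE_of_mem ht)
  exact ODE_solution_unique_of_mem_Icc_right (s := fun _ => univ)
    (fun _ _ => A.lipschitz.lipschitzOnWith) (fun t ht => (hx t ht).continuousWithinAt)
    (hright hx) (fun _ _ => mem_univ _) (fun t ht => (hy t ht).continuousWithinAt)
    (hright hy) (fun _ _ => mem_univ _) ha

def exclusionRate (lam : C(I01 × I01, ℝ)) (r : C(I01, ℝ)) (u v : I01) : ℝ :=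
  lam (u, v) * (r u + r v - 2 * r u * r v)

section Exclusion

variable (c : C(I01, ℝ)) (lam : C(I01 × I01, ℝ)) (ρ ϑ : ℝ → C(I01, ℝ)) (s : ℝ)

lemma K1_exclusion (h : ϑ s = ρ s) (u : I01) :
    K1 0 c lam 0 1 1 0 ρ ϑ s u
      = ∫ v, (exclusionRate lam (ρ s) u v + exclusionRate lam (ρ s) v u) := by
  set r := ρ s
  -- the summands are written as they appear in the `simp` normal form of `K1` below
  have hexpand (v : I01) : exclusionRate lam r u v + exclusionRate lam r v u
      = r u * lam (u, v) + r v * lam (u, v) + lam (v, u) * r v + r u * lam (v, u)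
        + 2 * r u * -(lam (u, v) * r v) + 2 * r u * -(lam (v, u) * r v) := by
    simp only [exclusionRate]; ring
  have hint {g : I01 → ℝ} (hg : Continuous g) : Integrable g := hg.integrable_of_compactSpace_s13
  simp only [hexpand]
  simp (disch := exact hint (by fun_prop)) only [integral_add, integral_const_mul]
  simp [K1, h, r]

lemma K2_exclusion (h : ϑ s = ρ s) (u v : I01) :
    K2 lam 0 1 1 0 ρ ϑ s u v = -2 * exclusionRate lam (ρ s) u v := by
  simp only [K2, exclusionRate, h, ContinuousMap.zero_apply, ContinuousMap.one_apply]
  ring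

theorem brk_exclusion (h : ϑ s = ρ s) (f : C(I01, ℝ)) :
    brk 0 c lam 0 1 1 0 ρ ϑ s f
      = ∫ u, ∫ v, exclusionRate lam (ρ s) u v * (f u - f v) ^ 2 := by
  have hrate : Continuous (uncurry (exclusionRate lam (ρ s))) := by
    unfold exclusionRate; fun_prop
  have hK2 (u v : I01) : K2 lam 0 1 1 0 ρ ϑ s u v * f u * f v
      = -2 * (exclusionRate lam (ρ s) u v * f u * f v) := by
    rw [K2_exclusion lam ρ ϑ s h]; ring
  simp only [brk, K1_exclusion c lam ρ ϑ s h, hK2, integral_const_mul,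
    integral_integral_mul_sub_sq hrate f.continuous]
  ring

end Exclusion

theorem stmt13_general
    (b c : C(I01, ℝ)) (lam a1 a2 a3 a4 : C(I01 × I01, ℝ))
    (φ : C(I01, ℝ)) (T : ℝ)
    (P8 : C(I01, ℝ) →L[ℝ] C(I01, ℝ))
    (hP8 : ∀ (f : C(I01, ℝ)) (u : I01),
      P8 f u = b u * (c u - 1) * f u
        + f u * (∫ v : I01, lam (v, u) * (a4 (v, u) - 1))
        + f u * (∫ v : I01, lam (u, v) * (a1 (u, v) - 1))
        + (∫ v : I01, lam (u, v) * a2 (u, v) * f v)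
        + (∫ v : I01, lam (v, u) * a3 (v, u) * f v))
    (ρ : ℝ → C(I01, ℝ)) (hρinit : ρ 0 = φ)
    (hρ : ∀ t ∈ Set.Ici (0 : ℝ), HasDerivWithinAt ρ (P8 (ρ t)) (Set.Ici 0) t)
    (P9 : C(I01, ℝ) →L[ℝ] C(I01, ℝ))
    (hP9 : ∀ (f : C(I01, ℝ)) (u : I01),
      P9 f u = (c u ^ 2 - 1) * b u * f u
        + f u * (∫ v : I01, lam (u, v) * (a1 (u, v) ^ 2 - 1))
        + (∫ v : I01, lam (u, v) * a2 (u, v) ^ 2 * f v)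
        + (∫ v : I01, lam (v, u) * a3 (v, u) ^ 2 * f v)
        + f u * (∫ v : I01, lam (v, u) * (a4 (v, u) ^ 2 - 1)))
    (lhat1 : ℝ → C(I01, ℝ))
    (hlhat1 : ∀ (t : ℝ) (u : I01),
      lhat1 t u = 2 * (∫ v : I01, ρ t u * ρ t v * a1 (u, v) * a2 (u, v) * lam (u, v))
        + 2 * ∫ v : I01, lam (v, u) * a3 (v, u) * a4 (v, u) * ρ t u * ρ t v)
    (ϑ : ℝ → C(I01, ℝ)) (hϑinit : ϑ 0 = φ)
    (hϑ : ∀ t ∈ Set.Icc (0 : ℝ) T,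
      HasDerivWithinAt ϑ (P9 (ϑ t) + lhat1 t) (Set.Icc 0 T) t)
    (hbz : ∀ u : I01, b u = 0)
    (ha1z : ∀ p : I01 × I01, a1 p = 0)
    (ha4z : ∀ p : I01 × I01, a4 p = 0)
    (ha2o : ∀ p : I01 × I01, a2 p = 1)
    (ha3o : ∀ p : I01 × I01, a3 p = 1) :
    (∀ (t : ℝ) (u : I01), lhat1 t u = 0) ∧
    (∀ t ∈ Set.Icc (0 : ℝ) T, ϑ t = ρ t) ∧
    ∀ s ∈ Set.Icc (0 : ℝ) T, ∀ f : C(I01, ℝ),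
      brk b c lam a1 a2 a3 a4 ρ ϑ s f
        = ∫ u : I01, ∫ v : I01,
            lam (u, v) * (ρ s u + ρ s v - 2 * ρ s u * ρ s v) * (f u - f v) ^ 2 := by
  obtain rfl : b = 0 := ContinuousMap.ext hbz
  obtain rfl : a1 = 0 := ContinuousMap.ext ha1z
  obtain rfl : a4 = 0 := ContinuousMap.ext ha4z
  obtain rfl : a2 = 1 := ContinuousMap.ext ha2o
  obtain rfl : a3 = 1 := ContinuousMap.ext ha3o
  have hlhat : ∀ t u, lhat1 t u = 0 := by simp [hlhat1]
  have hP : ∀ g, P9 g = P8 g := fun g => by ext u; simp [hP8, hP9]; ring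
  have hϑρ : EqOn ϑ ρ (Icc 0 T) := by
    refine ODE_solution_unique_linear_of_mem_Icc_right P8 (fun t ht => ?_)
      (fun t ht => (hρ t ht.1).mono Icc_subset_Ici_self) (hϑinit.trans hρinit.symm)
    simpa [hP, show lhat1 t = 0 from ContinuousMap.ext (hlhat t)] using hϑ t ht
  exact ⟨hlhat, hϑρ, fun s hs f => brk_exclusion c lam ρ ϑ s (hϑρ hs) f⟩

/-- pair-symmetric exclusion specialization: if `b ≡ 0`, `a₁ ≡ 0`,
`a₄ ≡ 0`, `a₂ ≡ 1`, `a₃ ≡ 1`, then `l̂_{1,t} ≡ 0`, `ϑ(t,·) = ρ(t,·)` on `[0,T]`, and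
`[f,f]_s = ∫₀¹∫₀¹ λ(u,v)(ρ(s,u)+ρ(s,v)−2ρ(s,u)ρ(s,v))(f(u)−f(v))² dudv`. -/
theorem stmt13
    (b c : C(I01, ℝ)) (lam a1 a2 a3 a4 : C(I01 × I01, ℝ))
    (hb : ∀ u, 0 ≤ b u) (hc : ∀ u, 0 ≤ c u)
    (hlam : ∀ p, 0 ≤ lam p) (ha1 : ∀ p, 0 ≤ a1 p) (ha2 : ∀ p, 0 ≤ a2 p)
    (ha3 : ∀ p, 0 ≤ a3 p) (ha4 : ∀ p, 0 ≤ a4 p)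
    (φ : C(I01, ℝ)) (T : ℝ) (hT : 0 < T)
    (P8 : C(I01, ℝ) →L[ℝ] C(I01, ℝ))
    (hP8 : ∀ (f : C(I01, ℝ)) (u : I01),
      P8 f u = b u * (c u - 1) * f u
        + f u * (∫ v : I01, lam (v, u) * (a4 (v, u) - 1))
        + f u * (∫ v : I01, lam (u, v) * (a1 (u, v) - 1))
        + (∫ v : I01, lam (u, v) * a2 (u, v) * f v)
        + (∫ v : I01, lam (v, u) * a3 (v, u) * f v))
    (ρ : ℝ → C(I01, ℝ)) (hρinit : ρ 0 = φ)
    (hρ : ∀ t ∈ Set.Ici (0 : ℝ), HasDerivWithinAt ρ (P8 (ρ t)) (Set.Ici 0) t)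
    (P9 : C(I01, ℝ) →L[ℝ] C(I01, ℝ))
    (hP9 : ∀ (f : C(I01, ℝ)) (u : I01),
      P9 f u = (c u ^ 2 - 1) * b u * f u
        + f u * (∫ v : I01, lam (u, v) * (a1 (u, v) ^ 2 - 1))
        + (∫ v : I01, lam (u, v) * a2 (u, v) ^ 2 * f v)
        + (∫ v : I01, lam (v, u) * a3 (v, u) ^ 2 * f v)
        + f u * (∫ v : I01, lam (v, u) * (a4 (v, u) ^ 2 - 1)))
    (lhat1 : ℝ → C(I01, ℝ))
    (hlhat1 : ∀ (t : ℝ) (u : I01),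
      lhat1 t u = 2 * (∫ v : I01, ρ t u * ρ t v * a1 (u, v) * a2 (u, v) * lam (u, v))
        + 2 * ∫ v : I01, lam (v, u) * a3 (v, u) * a4 (v, u) * ρ t u * ρ t v)
    (ϑ : ℝ → C(I01, ℝ)) (hϑinit : ϑ 0 = φ)
    (hϑ : ∀ t ∈ Set.Icc (0 : ℝ) T,
      HasDerivWithinAt ϑ (P9 (ϑ t) + lhat1 t) (Set.Icc 0 T) t)
    (hbz : ∀ u : I01, b u = 0)
    (ha1z : ∀ p : I01 × I01, a1 p = 0)
    (ha4z : ∀ p : I01 × I01, a4 p = 0)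
    (ha2o : ∀ p : I01 × I01, a2 p = 1)
    (ha3o : ∀ p : I01 × I01, a3 p = 1) :
    (∀ (t : ℝ) (u : I01), lhat1 t u = 0) ∧
    (∀ t ∈ Set.Icc (0 : ℝ) T, ϑ t = ρ t) ∧
    ∀ s ∈ Set.Icc (0 : ℝ) T, ∀ f : C(I01, ℝ),
      brk b c lam a1 a2 a3 a4 ρ ϑ s f
        = ∫ u : I01, ∫ v : I01,
            lam (u, v) * (ρ s u + ρ s v - 2 * ρ s u * ρ s v) * (f u - f v) ^ 2 :=
  stmt13_general b c lam a1 a2 a3 a4 φ T P8 hP8 ρ hρinit hρ P9 hP9 lhat1 hlhat1 ϑ hϑinit hϑ hbz ha1z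
    ha4z ha2o ha3o

end
end
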